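/- Let C be a finite candidate set with p ∈ C, let X and Y be finite multisets of 2-Approval votes on C (the registered and unregistered voters), and let ℓ ∈ ℕ with ℓ ≤ |X|. Let X_p be the submultiset of votes in X containing p and set s_p = |X_p| + min(ℓ, |X| − |X_p|, #{votes in Y containing p}); assume b_x := |C|·s_p − 2|X| ≥ 0. Let H be an integer with H > (|X| + 1)·|X| + |X|·|Y|. Define an edge-weighted loopless multigraph G on vertex set C ∪ {x}, where x is a new vertex: for each vote {a, b} in X one edge with endpoints a and b of weight |X| + 1; for each vote {a, b} in Y one edge with endpoints a and b of weight |X|; and for each c ∈ C∖{p}, s_p parallel edges with endpoints c and x, each of weight H. Set capacities b(c) = s_p for every c ∈ C and b(x) = b_x. Then the following are equivalent: (i) there exist submultisets X′ of X and Y′ of Y with |X′| = |Y′| ≤ ℓ such that p is a 2-Approval winner of the multiset (X − X′) + Y′; (ii) there exists a set S of edges of G such that every vertex v is an endpoint of at most b(v) edges of S and the total weight of S is at least b_x·H + |X|² + (|X| − ℓ). -/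

import Mathlib

/-- The 2-Approval score of candidate `c`: the number of votes containing `c`. -/
def apScore {C : Type} [DecidableEq C] (V : Multiset (Sym2 C)) (c : C) : ℕ :=
  Multiset.card (V.filter (fun v => c ∈ v))

/-- `c` is a 2-Approval winner of `V` if its score is at least that of every candidate. -/
def apWinner {C : Type} [Fintype C] [DecidableEq C] (V : Multiset (Sym2 C)) (c : C) : Prop :=
  ∀ d : C, apScore V d ≤ apScore V c

/-- The fixed final score of `p`:
`s_p = |X_p| + min(ℓ, |X| − |X_p|, #{votes in Y containing p})`, where `X_p` is the
submultiset of votes in `X` containing `p`. -/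
def spVal (C : Type) [DecidableEq C] (p : C) (X Y : Multiset (Sym2 C)) (ℓ : ℕ) : ℕ :=
  apScore X p + min ℓ (min (Multiset.card X - apScore X p) (apScore Y p))

/-- Edge-index set of `G`: one (light) edge per vote in `X`, one (light) edge per vote in
`Y`, and for each candidate `c ≠ p`, `s_p` parallel heavy edges `c–x`. -/
abbrev MWEdge (C : Type) [DecidableEq C] (p : C) (X Y : Multiset (Sym2 C)) (ℓ : ℕ) : Type :=
  Fin X.toList.length ⊕ (Fin Y.toList.length ⊕ ({c : C // c ≠ p} × Fin (spVal C p X Y ℓ)))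

/-- Endpoints of the edges of `G` (vertex set `C ⊕ Unit`, where `Sum.inr ()` is the
auxiliary vertex `x`): an edge of a vote `{a, b}` has endpoints `a` and `b`;
the heavy edges join `c` to `x`. -/
noncomputable def mwEnds (C : Type) [DecidableEq C] (p : C) (X Y : Multiset (Sym2 C))
    (ℓ : ℕ) : MWEdge C p X Y ℓ → Sym2 (C ⊕ Unit)
  | Sum.inl i => (X.toList.get i).map Sum.inl
  | Sum.inr (Sum.inl j) => (Y.toList.get j).map Sum.inl
  | Sum.inr (Sum.inr (c, _)) => s(Sum.inl c.1, Sum.inr ())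

/-- Edge weights: `|X| + 1` for edges from `X`, `|X|` for edges from `Y`, and `H` for the
heavy edges. -/
def mwWeight (C : Type) [DecidableEq C] (p : C) (X Y : Multiset (Sym2 C)) (ℓ : ℕ)
    (H : ℤ) : MWEdge C p X Y ℓ → ℤ
  | Sum.inl _ => (Multiset.card X : ℤ) + 1
  | Sum.inr (Sum.inl _) => (Multiset.card X : ℤ)
  | Sum.inr (Sum.inr _) => H

/-- Capacities: `b(c) = s_p` for every candidate `c`, and `b(x) = |C|·s_p − 2|X|`. -/
def mwBval (C : Type) [Fintype C] [DecidableEq C] (p : C) (X Y : Multiset (Sym2 C))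
    (ℓ : ℕ) : C ⊕ Unit → ℕ
  | Sum.inl _ => spVal C p X Y ℓ
  | Sum.inr _ => Fintype.card C * spVal C p X Y ℓ - 2 * Multiset.card X

set_option linter.unusedSectionVars false

section Helpers
variable {C : Type} [DecidableEq C]

lemma apScore_cons (v : Sym2 C) (V : Multiset (Sym2 C)) (c : C) :
    apScore (v ::ₘ V) c = apScore V c + (if c ∈ v then 1 else 0) := by
  simp [apScore, Multiset.filter_cons]
  split <;> simp [Nat.add_comm]

lemma apScore_add (A B : Multiset (Sym2 C)) (c : C) :
    apScore (A + B) c = apScore A c + apScore B c := by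
  simp [apScore, Multiset.filter_add]

lemma apScore_le_card (V : Multiset (Sym2 C)) (c : C) :
    apScore V c ≤ Multiset.card V :=
  Multiset.card_le_card (Multiset.filter_le _ _)

lemma apScore_mono {A B : Multiset (Sym2 C)} (h : A ≤ B) (c : C) :
    apScore A c ≤ apScore B c :=
  Multiset.card_le_card (Multiset.filter_le_filter _ h)

lemma apScore_sub {A B : Multiset (Sym2 C)} (h : A ≤ B) (c : C) :
    apScore (B - A) c = apScore B c - apScore A c := by
  rw [apScore, Multiset.filter_sub, Multiset.card_sub (Multiset.filter_le_filter _ h)]; rfl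

lemma apScore_erase {u : Sym2 C} {V : Multiset (Sym2 C)} (h : u ∈ V) (c : C) :
    apScore (V.erase u) c = apScore V c - (if c ∈ u then 1 else 0) := by
  conv_rhs => rw [← Multiset.cons_erase h]
  rw [apScore_cons]; omega

lemma cons_le_of_mem_sub {α : Type} [DecidableEq α] {m X : Multiset α} {w : α}
    (hm : m ≤ X) (hw : w ∈ X - m) : w ::ₘ m ≤ X := by
  rw [Multiset.le_iff_count]
  intro c
  have h1 : Multiset.count c m ≤ Multiset.count c X := Multiset.count_le_of_le c hm
  have h2 : 0 < Multiset.count w (X - m) := Multiset.count_pos.mpr hw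
  rw [Multiset.count_sub] at h2
  rw [Multiset.count_cons]
  split <;> rename_i h
  · subst h; omega
  · omega

/-- there is a vote in `V` not containing `p` -/
lemma exists_not_mem {p : C} {V : Multiset (Sym2 C)} (h : apScore V p < Multiset.card V) :
    ∃ w ∈ V, p ∉ w := by
  by_contra hc
  push_neg at hc
  rw [apScore, Multiset.filter_eq_self.mpr hc] at h
  omega

/-- there is a vote in `V` containing `p` -/
lemma exists_mem {p : C} {V : Multiset (Sym2 C)} (h : 0 < apScore V p) :
    ∃ w ∈ V, p ∈ w := by
  rw [apScore, Multiset.card_pos_iff_exists_mem] at h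
  obtain ⟨w, hw⟩ := h
  exact ⟨w, (Multiset.mem_filter.mp hw).1, (Multiset.mem_filter.mp hw).2⟩

lemma card_filter_mem_of_not_isDiag [Fintype C] {v : Sym2 C} (h : ¬ v.IsDiag) :
    (Finset.univ.filter (fun c => c ∈ v)).card = 2 := by
  induction v using Sym2.inductionOn with
  | hf a b =>
    rw [Sym2.isDiag_iff_proj_eq] at h
    have : (Finset.univ.filter (fun c => c ∈ s(a, b))) = {a, b} := by
      ext c; simp [Sym2.mem_iff]
    rw [this, Finset.card_insert_of_notMem (by simpa using h), Finset.card_singleton]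

lemma sum_apScore [Fintype C] (V : Multiset (Sym2 C)) (hV : ∀ v ∈ V, ¬ v.IsDiag) :
    ∑ c : C, apScore V c = 2 * Multiset.card V := by
  induction V using Multiset.induction with
  | empty => simp [apScore]
  | cons v V ih =>
    simp only [apScore_cons, Finset.sum_add_distrib]
    rw [ih (fun w hw => hV w (Multiset.mem_cons_of_mem hw))]
    have : ∑ c : C, (if c ∈ v then 1 else 0) = 2 := by
      rw [Finset.sum_boole, Nat.cast_id]
      exact card_filter_mem_of_not_isDiag (hV v (Multiset.mem_cons_self v V))
    rw [this, Multiset.card_cons]; ring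

end Helpers

section Index
variable {α : Type}

lemma map_get_le (l : List α) (A : Finset (Fin l.length)) :
    A.val.map l.get ≤ (l : Multiset α) := by
  have h : (Finset.univ : Finset (Fin l.length)).val.map l.get = (l : Multiset α) := by
    rw [Fin.univ_val_map, List.ofFn_get]
  rw [← h]
  exact Multiset.map_le_map (Finset.val_le_iff.mpr (Finset.subset_univ A))

lemma exists_indexFinset (l : List α) (m : Multiset α) (h : m ≤ (l : Multiset α)) :
    ∃ A : Finset (Fin l.length), A.val.map l.get = m := by
  have hsub : List.Subperm m.toList l := by
    rw [← Multiset.coe_le, Multiset.coe_toList]; exact h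
  obtain ⟨l₁, hperm, hsl⟩ := hsub
  rw [List.sublist_iff_exists_fin_orderEmbedding_get_eq] at hsl
  obtain ⟨f, hf⟩ := hsl
  refine ⟨Finset.univ.map ⟨f, f.injective⟩, ?_⟩
  rw [Finset.map_val, Multiset.map_map]
  have : (l.get ∘ ⇑(⟨⇑f, f.injective⟩ : Fin l₁.length ↪ Fin l.length)) = l₁.get := by
    funext i; exact (hf i).symm
  rw [this]
  have h2 : (Finset.univ : Finset (Fin l₁.length)).val.map l₁.get = (l₁ : Multiset α) := by
    rw [Fin.univ_val_map, List.ofFn_get]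
  rw [h2]
  rw [← Multiset.coe_toList m, Multiset.coe_eq_coe]
  exact hperm

end Index

section Index2
variable {C : Type} [DecidableEq C]

lemma card_filter_index (l : List (Sym2 C)) (A : Finset (Fin l.length)) (c : C) :
    (A.filter (fun i => c ∈ l.get i)).card = apScore (A.val.map l.get) c := by
  rw [apScore, Multiset.filter_map, Multiset.card_map, Finset.card, Finset.filter_val]
  rfl

end Index2

lemma filter_disjSum {α β : Type*} (A : Finset α) (B : Finset β) (p : α ⊕ β → Prop)
    [DecidablePred p] :
    (A.disjSum B).filter p
      = (A.filter (fun a => p (Sum.inl a))).disjSum (B.filter (fun b => p (Sum.inr b))) := by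
  ext x; cases x <;> simp

lemma card_filter_fin_lt (s t : ℕ) :
    (Finset.univ.filter (fun i : Fin s => (i : ℕ) < t)).card = min t s := by
  rw [Finset.card_filter, Fin.sum_univ_eq_sum_range (fun i => if i < t then 1 else 0),
    ← Finset.card_filter]
  have : (Finset.range s).filter (fun i => i < t) = Finset.range (min t s) := by
    ext i; simp [Finset.mem_filter, Finset.mem_range]; omega
  rw [this, Finset.card_range]

lemma heavy_card_gen {C : Type} [Fintype C] [DecidableEq C] (p : C) (s : ℕ)
    (P : {c : C // c ≠ p} → Prop) [DecidablePred P] (g : C → ℕ) :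
    (Finset.univ.filter
        (fun ci : {c : C // c ≠ p} × Fin s => P ci.1 ∧ (ci.2 : ℕ) < g ci.1.1)).card
      = ∑ c ∈ Finset.univ.filter (fun c : {c : C // c ≠ p} => P c), min (g c.1) s := by
  rw [Finset.card_filter, Fintype.sum_prod_type, Finset.sum_filter]
  refine Finset.sum_congr rfl (fun c _ => ?_)
  by_cases hP : P c
  · simp only [hP, if_true, true_and]
    rw [← card_filter_fin_lt s (g c.1), Finset.card_filter]
  · simp [hP]

section Swap
variable {C : Type} [Fintype C] [DecidableEq C]

lemma score_le_spVal (p : C) (X Y : Multiset (Sym2 C)) (ℓ : ℕ)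
    {X' Y' : Multiset (Sym2 C)} (hX' : X' ≤ X) (hY' : Y' ≤ Y)
    (hcard : Multiset.card X' = Multiset.card Y') (hk : Multiset.card X' ≤ ℓ) :
    apScore ((X - X') + Y') p ≤ spVal C p X Y ℓ := by
  rw [apScore_add, apScore_sub hX']
  have h1 : apScore Y' p ≤ Multiset.card Y' := apScore_le_card _ _
  have h2 : apScore Y' p ≤ apScore Y p := apScore_mono hY' _
  have h3 : apScore X' p ≤ apScore X p := apScore_mono hX' _
  have h4 : apScore X p ≤ Multiset.card X := apScore_le_card _ _
  have h5 : apScore X' p ≤ Multiset.card X' := apScore_le_card _ _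
  have h6 : Multiset.card X' ≤ Multiset.card X := Multiset.card_le_card hX'
  have h7 := apScore_le_card (X - X') p
  rw [apScore_sub hX', Multiset.card_sub hX'] at h7
  unfold spVal; omega

lemma spVal_le_card (p : C) (X Y : Multiset (Sym2 C)) (ℓ : ℕ) :
    spVal C p X Y ℓ ≤ Multiset.card X := by
  have h4 : apScore X p ≤ Multiset.card X := apScore_le_card _ _
  unfold spVal; omega

lemma swap_step (p : C) (X Y : Multiset (Sym2 C)) (ℓ : ℕ)
    {X' Y' : Multiset (Sym2 C)} (hX' : X' ≤ X) (hY' : Y' ≤ Y)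
    (hcard : Multiset.card X' = Multiset.card Y') (hk : Multiset.card X' ≤ ℓ)
    (hwin : apWinner ((X - X') + Y') p)
    (hlt : apScore ((X - X') + Y') p < spVal C p X Y ℓ) :
    ∃ X'' ≤ X, ∃ Y'' ≤ Y, Multiset.card X'' = Multiset.card Y'' ∧ Multiset.card X'' ≤ ℓ ∧
      apWinner ((X - X'') + Y'') p ∧
      apScore ((X - X')+ Y') p + 1 ≤ apScore ((X - X'') + Y'') p := by
  have hXc : Multiset.card X' ≤ Multiset.card X := Multiset.card_le_card hX'
  have hW : Multiset.card ((X - X') + Y') = Multiset.card X := by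
    rw [Multiset.card_add, Multiset.card_sub hX']; omega
  have hscore : apScore ((X - X') + Y') p = (apScore X p - apScore X' p) + apScore Y' p := by
    rw [apScore_add, apScore_sub hX']
  have hXpmono : apScore X' p ≤ apScore X p := apScore_mono hX' _
  obtain ⟨w, hwW, hwp⟩ : ∃ w ∈ (X - X') + Y', p ∉ w := by
    apply exists_not_mem
    rw [hW]
    exact Nat.lt_of_lt_of_le hlt (spVal_le_card p X Y ℓ)
  have hsle : spVal C p X Y ℓ ≤ apScore X p + ℓ := by unfold spVal; omega
  have hsle2 : spVal C p X Y ℓ ≤ apScore X p + apScore Y p := by unfold spVal; omega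
  by_cases hXp : 0 < apScore X' p
  · -- Case 1 : X' removes a p-vote u
    obtain ⟨u, huX', hup⟩ := exists_mem hXp
    have hpos : 0 < Multiset.card X' := Multiset.card_pos_iff_exists_mem.mpr ⟨u, huX'⟩
    rcases Multiset.mem_add.mp hwW with hw1 | hw2
    · -- Case 1a : w ∈ X - X'
      have hX'' : w ::ₘ X'.erase u ≤ X := cons_le_of_mem_sub
        (le_trans (Multiset.erase_le u X') hX')
        (Multiset.mem_of_le (tsub_le_tsub_left (Multiset.erase_le u X') X) hw1)
      have heqp : apScore (w ::ₘ X'.erase u) p = apScore X' p - 1 := by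
        rw [apScore_cons, apScore_erase huX', if_pos hup, if_neg hwp, Nat.add_zero]
      refine ⟨w ::ₘ X'.erase u, hX'', Y', hY', ?_, ?_, ?_, ?_⟩
      · rw [Multiset.card_cons, Multiset.card_erase_of_mem huX', Nat.pred_eq_sub_one]; omega
      · rw [Multiset.card_cons, Multiset.card_erase_of_mem huX', Nat.pred_eq_sub_one]; omega
      · intro d
        have hwd := hwin d
        have heqd : apScore (w ::ₘ X'.erase u) d
            = (apScore X' d - (if d ∈ u then 1 else 0)) + (if d ∈ w then 1 else 0) := by
          rw [apScore_cons, apScore_erase huX']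
        have h1 : apScore X' d ≤ apScore X d := apScore_mono hX' d
        have h2 : apScore (w ::ₘ X'.erase u) d ≤ apScore X d := apScore_mono hX'' d
        rw [apScore_add, apScore_sub hX', hscore] at hwd
        rw [apScore_add, apScore_sub hX'', apScore_add, apScore_sub hX'', heqp]
        split_ifs at heqd <;> omega
      · rw [hscore, apScore_add, apScore_sub hX'', heqp]; omega
    · -- Case 1b : w ∈ Y'
      have hwpos : 0 < Multiset.card Y' := Multiset.card_pos_iff_exists_mem.mpr ⟨w, hw2⟩
      have hX'' : X'.erase u ≤ X := le_trans (Multiset.erase_le u X') hX'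
      have hY'' : Y'.erase w ≤ Y := le_trans (Multiset.erase_le w Y') hY'
      have heqp : apScore (X'.erase u) p = apScore X' p - 1 := by
        rw [apScore_erase huX', if_pos hup]
      have heqYp : apScore (Y'.erase w) p = apScore Y' p := by
        rw [apScore_erase hw2, if_neg hwp]; omega
      refine ⟨X'.erase u, hX'', Y'.erase w, hY'', ?_, ?_, ?_, ?_⟩
      · rw [Multiset.card_erase_of_mem huX', Multiset.card_erase_of_mem hw2,
          Nat.pred_eq_sub_one, Nat.pred_eq_sub_one]; omega
      · rw [Multiset.card_erase_of_mem huX', Nat.pred_eq_sub_one]; omega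
      · intro d
        have hwd := hwin d
        have heqd : apScore (X'.erase u) d = apScore X' d - (if d ∈ u then 1 else 0) := by
          rw [apScore_erase huX']
        have heqYd : apScore (Y'.erase w) d = apScore Y' d - (if d ∈ w then 1 else 0) := by
          rw [apScore_erase hw2]
        have h1 : apScore X' d ≤ apScore X d := apScore_mono hX' d
        have h2 : apScore (X'.erase u) d ≤ apScore X d := apScore_mono hX'' d
        have h3 : apScore (Y'.erase w) d ≤ apScore Y' d :=
          apScore_mono (Multiset.erase_le w Y') d
        rw [apScore_add, apScore_sub hX', hscore] at hwd
        rw [apScore_add, apScore_sub hX'', apScore_add, apScore_sub hX'', heqp, heqYp]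
        split_ifs at heqd heqYd <;> omega
      · rw [hscore, apScore_add, apScore_sub hX'', heqp, heqYp]; omega
  · -- Case 2 : X' removes no p-vote
    have hXp0 : apScore X' p = 0 := by omega
    have hYmono : apScore Y' p ≤ apScore Y p := apScore_mono hY' _
    have hYlt : apScore Y' p < apScore Y p := by omega
    obtain ⟨v, hv, hvp⟩ : ∃ v ∈ Y - Y', p ∈ v := by
      apply exists_mem
      rw [apScore_sub hY']; omega
    by_cases hYfull : apScore Y' p < Multiset.card Y'
    · -- Case 2a : some vote of Y' misses p
      obtain ⟨w', hw'Y', hw'p⟩ := exists_not_mem hYfull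
      have hY'' : v ::ₘ Y'.erase w' ≤ Y := cons_le_of_mem_sub
        (le_trans (Multiset.erase_le w' Y') hY')
        (Multiset.mem_of_le (tsub_le_tsub_left (Multiset.erase_le w' Y') Y) hv)
      have heqYp : apScore (v ::ₘ Y'.erase w') p = apScore Y' p + 1 := by
        rw [apScore_cons, apScore_erase hw'Y', if_pos hvp, if_neg hw'p]; omega
      have hwpos : 0 < Multiset.card Y' := Multiset.card_pos_iff_exists_mem.mpr ⟨w', hw'Y'⟩
      refine ⟨X', hX', v ::ₘ Y'.erase w', hY'', ?_, hk, ?_, ?_⟩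
      · rw [Multiset.card_cons, Multiset.card_erase_of_mem hw'Y', Nat.pred_eq_sub_one]; omega
      · intro d
        have hwd := hwin d
        have heqYd : apScore (v ::ₘ Y'.erase w') d
            = (apScore Y' d - (if d ∈ w' then 1 else 0)) + (if d ∈ v then 1 else 0) := by
          rw [apScore_cons, apScore_erase hw'Y']
        have h1 : apScore X' d ≤ apScore X d := apScore_mono hX' d
        rw [apScore_add, apScore_sub hX', hscore] at hwd
        rw [apScore_add, apScore_sub hX', apScore_add, apScore_sub hX', heqYp]
        split_ifs at heqYd <;> omega
      · rw [hscore, apScore_add, apScore_sub hX', heqYp]; omega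
    · -- Case 2b : every vote of Y' contains p
      have hYall : apScore Y' p = Multiset.card Y' := by
        have := apScore_le_card Y' p; omega
      have hw1 : w ∈ X - X' := by
        rcases Multiset.mem_add.mp hwW with h | h
        · exact h
        · exfalso
          apply hwp
          have hfe : Multiset.filter (fun v => p ∈ v) Y' = Y' :=
            Multiset.eq_of_le_of_card_le (Multiset.filter_le _ _) (le_of_eq hYall.symm)
          have : w ∈ Multiset.filter (fun v => p ∈ v) Y' := by rw [hfe]; exact h
          exact (Multiset.mem_filter.mp this).2
      have hkl : Multiset.card X' < ℓ := by omega
      have hX'' : w ::ₘ X' ≤ X := cons_le_of_mem_sub hX' hw1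
      have hY'' : v ::ₘ Y' ≤ Y := cons_le_of_mem_sub hY' hv
      have heqp : apScore (w ::ₘ X') p = 0 := by
        rw [apScore_cons, if_neg hwp, hXp0]
      have heqYp : apScore (v ::ₘ Y') p = apScore Y' p + 1 := by
        rw [apScore_cons, if_pos hvp]
      refine ⟨w ::ₘ X', hX'', v ::ₘ Y', hY'', ?_, ?_, ?_, ?_⟩
      · rw [Multiset.card_cons, Multiset.card_cons]; omega
      · rw [Multiset.card_cons]; omega
      · intro d
        have hwd := hwin d
        have heqd : apScore (w ::ₘ X') d = apScore X' d + (if d ∈ w then 1 else 0) := by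
          rw [apScore_cons]
        have heqYd : apScore (v ::ₘ Y') d = apScore Y' d + (if d ∈ v then 1 else 0) := by
          rw [apScore_cons]
        have h1 : apScore X' d ≤ apScore X d := apScore_mono hX' d
        have h2 : apScore (w ::ₘ X') d ≤ apScore X d := apScore_mono hX'' d
        rw [apScore_add, apScore_sub hX', hscore] at hwd
        rw [apScore_add, apScore_sub hX'', apScore_add, apScore_sub hX'', heqp, heqYp]
        split_ifs at heqd heqYd <;> omega
      · rw [hscore, apScore_add, apScore_sub hX'', heqp, heqYp]; omega

lemma exists_opt_swap (p : C) (X Y : Multiset (Sym2 C)) (ℓ : ℕ)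
    (h : ∃ X' ≤ X, ∃ Y' ≤ Y,
        Multiset.card X' = Multiset.card Y' ∧ Multiset.card X' ≤ ℓ ∧
        apWinner ((X - X') + Y') p) :
    ∃ X' ≤ X, ∃ Y' ≤ Y,
        Multiset.card X' = Multiset.card Y' ∧ Multiset.card X' ≤ ℓ ∧
        apWinner ((X - X') + Y') p ∧
        apScore ((X - X') + Y') p = spVal C p X Y ℓ := by
  obtain ⟨X', hX', Y', hY', hc, hkk, hwin⟩ := h
  suffices hs : ∀ t : ℕ, ∀ X' Y' : Multiset (Sym2 C), X' ≤ X → Y' ≤ Y →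
      Multiset.card X' = Multiset.card Y' → Multiset.card X' ≤ ℓ →
      apWinner ((X - X') + Y') p →
      spVal C p X Y ℓ - apScore ((X - X') + Y') p ≤ t →
      ∃ X' ≤ X, ∃ Y' ≤ Y,
        Multiset.card X' = Multiset.card Y' ∧ Multiset.card X' ≤ ℓ ∧
        apWinner ((X - X') + Y') p ∧
        apScore ((X - X') + Y') p = spVal C p X Y ℓ by
    exact hs _ X' Y' hX' hY' hc hkk hwin le_rfl
  intro t
  induction t with
  | zero =>
    intro X' Y' hX' hY' hc hkk hwin ht
    have hle := score_le_spVal p X Y ℓ hX' hY' hc hkk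
    exact ⟨X', hX', Y', hY', hc, hkk, hwin, by omega⟩
  | succ t ih =>
    intro X' Y' hX' hY' hc hkk hwin ht
    have hle := score_le_spVal p X Y ℓ hX' hY' hc hkk
    by_cases heq : apScore ((X - X') + Y') p = spVal C p X Y ℓ
    · exact ⟨X', hX', Y', hY', hc, hkk, hwin, heq⟩
    · obtain ⟨X'', hX'', Y'', hY'', hc', hkk', hwin', hsc⟩ :=
        swap_step p X Y ℓ hX' hY' hc hkk hwin (by omega)
      have hle' := score_le_spVal p X Y ℓ hX'' hY'' hc' hkk'
      exact ih X'' Y'' hX'' hY'' hc' hkk' hwin' (by omega)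

end Swap

section Matching
variable {C : Type} [Fintype C] [DecidableEq C]

lemma filter_card_at_inl (p : C) (X Y : Multiset (Sym2 C)) (ℓ : ℕ)
    (A : Finset (Fin X.toList.length)) (B : Finset (Fin Y.toList.length))
    (Hs : Finset ({c : C // c ≠ p} × Fin (spVal C p X Y ℓ))) (c : C) :
    ((A.disjSum (B.disjSum Hs)).filter
        (fun e => (Sum.inl c : C ⊕ Unit) ∈ mwEnds C p X Y ℓ e)).card
      = apScore (A.val.map X.toList.get) c + apScore (B.val.map Y.toList.get) c
        + (Hs.filter (fun ci => ci.1.1 = c)).card := by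
  rw [filter_disjSum, filter_disjSum, Finset.card_disjSum, Finset.card_disjSum]
  have hA : A.filter (fun a => (Sum.inl c : C ⊕ Unit) ∈ mwEnds C p X Y ℓ (Sum.inl a))
      = A.filter (fun i => c ∈ X.toList.get i) := by
    ext i; simp [mwEnds, Sym2.mem_map]
  have hB : B.filter (fun b => (Sum.inl c : C ⊕ Unit) ∈ mwEnds C p X Y ℓ (Sum.inr (Sum.inl b)))
      = B.filter (fun j => c ∈ Y.toList.get j) := by
    ext j; simp [mwEnds, Sym2.mem_map]
  have hH : Hs.filter
      (fun ci => (Sum.inl c : C ⊕ Unit) ∈ mwEnds C p X Y ℓ (Sum.inr (Sum.inr ci)))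
      = Hs.filter (fun ci => ci.1.1 = c) := by
    ext ci; simp [mwEnds, Sym2.mem_iff, eq_comm]
  rw [hA, hB, hH, card_filter_index, card_filter_index]
  ring

lemma filter_card_at_inr (p : C) (X Y : Multiset (Sym2 C)) (ℓ : ℕ)
    (A : Finset (Fin X.toList.length)) (B : Finset (Fin Y.toList.length))
    (Hs : Finset ({c : C // c ≠ p} × Fin (spVal C p X Y ℓ))) :
    ((A.disjSum (B.disjSum Hs)).filter
        (fun e => (Sum.inr () : C ⊕ Unit) ∈ mwEnds C p X Y ℓ e)).card = Hs.card := by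
  rw [filter_disjSum, filter_disjSum, Finset.card_disjSum, Finset.card_disjSum]
  have hA : A.filter (fun a => (Sum.inr () : C ⊕ Unit) ∈ mwEnds C p X Y ℓ (Sum.inl a)) = ∅ := by
    ext i; simp [mwEnds, Sym2.mem_map]
  have hB : B.filter
      (fun b => (Sum.inr () : C ⊕ Unit) ∈ mwEnds C p X Y ℓ (Sum.inr (Sum.inl b))) = ∅ := by
    ext j; simp [mwEnds, Sym2.mem_map]
  have hH : Hs.filter
      (fun ci => (Sum.inr () : C ⊕ Unit) ∈ mwEnds C p X Y ℓ (Sum.inr (Sum.inr ci))) = Hs := by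
    ext ci; simp [mwEnds, Sym2.mem_iff]
  rw [hA, hB, hH]
  simp

lemma weight_sum (p : C) (X Y : Multiset (Sym2 C)) (ℓ : ℕ) (H : ℤ)
    (A : Finset (Fin X.toList.length)) (B : Finset (Fin Y.toList.length))
    (Hs : Finset ({c : C // c ≠ p} × Fin (spVal C p X Y ℓ))) :
    ∑ e ∈ A.disjSum (B.disjSum Hs), mwWeight C p X Y ℓ H e
      = (A.card : ℤ) * ((Multiset.card X : ℤ) + 1)
        + (B.card : ℤ) * (Multiset.card X : ℤ) + (Hs.card : ℤ) * H := by
  rw [Finset.sum_disjSum, Finset.sum_disjSum]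
  simp only [mwWeight, Finset.sum_const, nsmul_eq_mul]
  ring

lemma sum_subtype_ne (p : C) (f : C → ℕ) :
    ∑ c : {c : C // c ≠ p}, f c.1 = ∑ c ∈ Finset.univ.erase p, f c :=
  (Finset.sum_subtype _ (by simp) f).symm

end Matching

/-- `p` can be made a 2-Approval winner by replacing at most `ℓ` registered
votes of `X` by the same number of unregistered votes of `Y` iff the edge-weighted
multigraph `G` has a `b`-matching of total weight at least `b_x·H + |X|² + (|X| − ℓ)`. -/
theorem stmt3 {C : Type} [Fintype C] [DecidableEq C] (p : C) (X Y : Multiset (Sym2 C))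
    (hX : ∀ v ∈ X, ¬ v.IsDiag) (hY : ∀ v ∈ Y, ¬ v.IsDiag)
    (ℓ : ℕ) (hℓX : ℓ ≤ Multiset.card X)
    (hbx : 2 * Multiset.card X ≤ Fintype.card C * spVal C p X Y ℓ)
    (H : ℤ)
    (hH : ((Multiset.card X : ℤ) + 1) * (Multiset.card X : ℤ)
        + (Multiset.card X : ℤ) * (Multiset.card Y : ℤ) < H) :
    (∃ X' ≤ X, ∃ Y' ≤ Y,
        Multiset.card X' = Multiset.card Y' ∧ Multiset.card X' ≤ ℓ ∧
        apWinner ((X - X') + Y') p)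
    ↔ ∃ S : Finset (MWEdge C p X Y ℓ),
        (∀ v : C ⊕ Unit,
            (S.filter (fun e => v ∈ mwEnds C p X Y ℓ e)).card ≤ mwBval C p X Y ℓ v) ∧
        ((Fintype.card C * spVal C p X Y ℓ - 2 * Multiset.card X : ℕ) : ℤ) * H
            + (Multiset.card X : ℤ) ^ 2 + ((Multiset.card X : ℤ) - (ℓ : ℤ))
          ≤ ∑ e ∈ S, mwWeight C p X Y ℓ H e := by
  set s := spVal C p X Y ℓ with hsdef
  set n := Multiset.card X with hndef
  constructor
  · intro h
    obtain ⟨X', hX', Y', hY', hc, hk, hwin, hsc⟩ := exists_opt_swap p X Y ℓ h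
    obtain ⟨A, hA⟩ := exists_indexFinset X.toList (X - X')
      (by rw [Multiset.coe_toList]; exact tsub_le_self)
    obtain ⟨B, hB⟩ := exists_indexFinset Y.toList Y'
      (by rw [Multiset.coe_toList]; exact hY')
    set W := (X - X') + Y' with hWdef
    have hscs : apScore W p = s := hsc.trans hsdef.symm
    have hWle : ∀ c, apScore W c ≤ s := fun c => le_trans (hwin c) (le_of_eq hscs)
    have hkn : Multiset.card X' ≤ n := Multiset.card_le_card hX'
    have hWcard : Multiset.card W = n := by
      rw [hWdef, Multiset.card_add, Multiset.card_sub hX']; omega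
    have hWdiag : ∀ v ∈ W, ¬ v.IsDiag := by
      intro v hv; rcases Multiset.mem_add.mp hv with h | h
      · exact hX v (Multiset.mem_of_le tsub_le_self h)
      · exact hY v (Multiset.mem_of_le hY' h)
    have hsum : ∑ c : C, apScore W c = 2 * n := by rw [sum_apScore W hWdiag, hWcard]
    set g : C → ℕ := fun c => s - apScore W c with hgdef
    set Hset : Finset ({c : C // c ≠ p} × Fin s) :=
      Finset.univ.filter (fun ci => (ci.2 : ℕ) < g ci.1.1) with hHdef
    have hep : (Finset.univ.erase p).card + 1 = Fintype.card C := by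
      rw [Finset.card_erase_of_mem (Finset.mem_univ p), Finset.card_univ]
      have : 0 < Fintype.card C := Fintype.card_pos_iff.mpr ⟨p⟩
      omega
    have hmul : Fintype.card C * s = (Finset.univ.erase p).card * s + s := by
      rw [← hep]; ring
    have hsump : apScore W p + ∑ c ∈ Finset.univ.erase p, apScore W c = 2 * n := by
      rw [Finset.add_sum_erase _ _ (Finset.mem_univ p)]; exact hsum
    have hHcard : Hset.card = Fintype.card C * s - 2 * n := by
      have h1 : Hset.card = ∑ c ∈ Finset.univ.erase p, min (g c) s := by
        rw [hHdef]
        have h2 := heavy_card_gen p s (fun _ => True) g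
        simp only [true_and, Finset.filter_true] at h2
        rw [h2, sum_subtype_ne p (fun c => min (g c) s)]
      have h3 : ∀ c ∈ Finset.univ.erase p, min (g c) s = g c :=
        fun c _ => min_eq_left tsub_le_self
      have h5 : ∑ c ∈ Finset.univ.erase p, min (g c) s = ∑ c ∈ Finset.univ.erase p, g c :=
        Finset.sum_congr rfl h3
      have h4 : ∑ c ∈ Finset.univ.erase p, g c + ∑ c ∈ Finset.univ.erase p, apScore W c
          = (Finset.univ.erase p).card * s := by
        rw [← Finset.sum_add_distrib]
        rw [Finset.sum_congr rfl (fun c _ => Nat.sub_add_cancel (hWle c))]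
        rw [Finset.sum_const, smul_eq_mul]
      omega
    have hHat : ∀ c : C, (Hset.filter (fun ci => ci.1.1 = c)).card
        = if c = p then 0 else g c := by
      intro c
      rw [hHdef, Finset.filter_filter]
      have heq : Finset.univ.filter
          (fun ci : {c' : C // c' ≠ p} × Fin s => ((ci.2 : ℕ) < g ci.1.1) ∧ ci.1.1 = c)
          = Finset.univ.filter (fun ci => (ci.1.1 = c) ∧ (ci.2 : ℕ) < g ci.1.1) := by
        ext ci; simp only [Finset.mem_filter]; tauto
      rw [heq, heavy_card_gen p s (fun c' => c'.1 = c) g]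
      by_cases hcp : c = p
      · rw [if_pos hcp]
        have he : Finset.univ.filter (fun c' : {c' : C // c' ≠ p} => c'.1 = c) = ∅ := by
          ext c'
          simp only [Finset.mem_filter, Finset.mem_univ, true_and, Finset.notMem_empty,
            iff_false]
          rw [hcp]; exact c'.2
        rw [he, Finset.sum_empty]
      · have he : Finset.univ.filter (fun c' : {c' : C // c' ≠ p} => c'.1 = c)
            = {⟨c, hcp⟩} := by
          ext c'; simp [Subtype.ext_iff]
        rw [he, Finset.sum_singleton, if_neg hcp]
        exact min_eq_left tsub_le_self
    refine ⟨A.disjSum (B.disjSum Hset), ?_, ?_⟩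
    · rintro (c | u)
      · rw [filter_card_at_inl, hA, hB, hHat c]
        show _ ≤ s
        have hadd : apScore W c = apScore (X - X') c + apScore Y' c := apScore_add _ _ _
        have h2 := hWle c
        have hg : g c = s - apScore W c := rfl
        split_ifs <;> omega
      · cases u
        rw [filter_card_at_inr, hHcard]
        exact le_refl _
    · rw [weight_sum]
      have hAcard : A.card = n - Multiset.card X' := by
        have h1 : Multiset.card (A.val.map X.toList.get) = A.card := by
          rw [Multiset.card_map]; rfl
        rw [← h1, hA, Multiset.card_sub hX']
      have hBcard : B.card = Multiset.card X' := by
        have h1 : Multiset.card (B.val.map Y.toList.get) = B.card := by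
          rw [Multiset.card_map]; rfl
        rw [← h1, hB, ← hc]
      rw [hAcard, hBcard, hHcard]
      have hcast : ((n - Multiset.card X' : ℕ) : ℤ) = (n : ℤ) - (Multiset.card X' : ℤ) := by
        rw [Nat.cast_sub hkn]
      rw [hcast]
      have hkℓ : ((Multiset.card X' : ℕ) : ℤ) ≤ (ℓ : ℤ) := by exact_mod_cast hk
      have hexp : ((n : ℤ) - (Multiset.card X' : ℤ)) * ((n : ℤ) + 1)
          + (Multiset.card X' : ℤ) * (n : ℤ)
          = (n : ℤ) ^ 2 + (n : ℤ) - (Multiset.card X' : ℤ) := by ring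
      linarith
  · rintro ⟨S, hcap, hwt⟩
    set m := Multiset.card Y with hmdef
    set A := S.toLeft with hAdef
    set B := S.toRight.toLeft with hBdef
    set Hs := S.toRight.toRight with hHsdef
    have hS : A.disjSum (B.disjSum Hs) = S := by
      rw [hBdef, hHsdef, Finset.toLeft_disjSum_toRight, hAdef,
        Finset.toLeft_disjSum_toRight]
    set Xs := A.val.map X.toList.get with hXsdef
    set Ys := B.val.map Y.toList.get with hYsdef
    have hXsle : Xs ≤ X := by
      rw [hXsdef]
      have := map_get_le X.toList A
      rwa [Multiset.coe_toList] at this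
    have hYsle : Ys ≤ Y := by
      rw [hYsdef]
      have := map_get_le Y.toList B
      rwa [Multiset.coe_toList] at this
    have hXscard : Multiset.card Xs = A.card := by rw [hXsdef, Multiset.card_map]; rfl
    have hYscard : Multiset.card Ys = B.card := by rw [hYsdef, Multiset.card_map]; rfl
    set W := Xs + Ys with hWdef
    set hdeg : C → ℕ := fun c => (Hs.filter (fun ci => ci.1.1 = c)).card with hdegdef
    have hcapc : ∀ c : C, apScore W c + hdeg c ≤ s := by
      intro c
      have h1 := hcap (Sum.inl c)
      rw [← hS, filter_card_at_inl] at h1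
      have h2 : mwBval C p X Y ℓ (Sum.inl c) = s := rfl
      rw [h2] at h1
      rw [hWdef, apScore_add]
      exact h1
    have hcapx : Hs.card ≤ Fintype.card C * s - 2 * n := by
      have h1 := hcap (Sum.inr ())
      rw [← hS, filter_card_at_inr] at h1
      exact h1
    rw [← hS, weight_sum] at hwt
    have hAn : A.card ≤ n := by
      have h1 : A.card ≤ Fintype.card (Fin X.toList.length) := Finset.card_le_univ A
      rw [Fintype.card_fin] at h1
      have h2 : X.toList.length = n := Multiset.length_toList X
      omega
    have hBm : B.card ≤ m := by
      have h1 : B.card ≤ Fintype.card (Fin Y.toList.length) := Finset.card_le_univ B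
      rw [Fintype.card_fin] at h1
      have h2 : Y.toList.length = m := Multiset.length_toList Y
      omega
    have hdegp : hdeg p = 0 := by
      rw [hdegdef]
      rw [Finset.card_eq_zero, Finset.filter_eq_empty_iff]
      exact fun ci _ => ci.1.2
    have hdegsum : ∑ c : C, hdeg c = Hs.card :=
      (Finset.card_eq_sum_card_fiberwise (fun ci _ => Finset.mem_univ ci.1.1)).symm
    have hWdiag : ∀ v ∈ W, ¬ v.IsDiag := by
      intro v hv; rcases Multiset.mem_add.mp hv with h | h
      · exact hX v (Multiset.mem_of_le hXsle h)
      · exact hY v (Multiset.mem_of_le hYsle h)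
    have hWcard : Multiset.card W = A.card + B.card := by
      rw [hWdef, Multiset.card_add, hXscard, hYscard]
    have hscoresum : ∑ c : C, apScore W c = 2 * (A.card + B.card) := by
      rw [sum_apScore W hWdiag, hWcard]
    have hcsum : 2 * (A.card + B.card) + Hs.card ≤ Fintype.card C * s := by
      calc 2 * (A.card + B.card) + Hs.card
          = ∑ c : C, apScore W c + ∑ c : C, hdeg c := by rw [hscoresum, hdegsum]
        _ = ∑ c : C, (apScore W c + hdeg c) := (Finset.sum_add_distrib).symm
        _ ≤ ∑ _c : C, s := Finset.sum_le_sum (fun c _ => hcapc c)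
        _ = Fintype.card C * s := by rw [Finset.sum_const, smul_eq_mul, Finset.card_univ]
    -- integer bookkeeping
    have hfoldn : (Multiset.card X : ℤ) = (n : ℤ) := rfl
    rw [hfoldn] at hwt
    have hbxz : ((Fintype.card C * s - 2 * n : ℕ) : ℤ)
        = (Fintype.card C : ℤ) * (s : ℤ) - 2 * (n : ℤ) := by
      rw [Nat.cast_sub hbx]; push_cast; ring
    have hHpos : (0 : ℤ) < H := by
      have hnn : (0 : ℤ) ≤ ((n : ℤ) + 1) * (n : ℤ) := by positivity
      have hnm : (0 : ℤ) ≤ (n : ℤ) * (m : ℤ) := by positivity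
      linarith
    have haz : (A.card : ℤ) ≤ (n : ℤ) := by exact_mod_cast hAn
    have hbz : (B.card : ℤ) ≤ (m : ℤ) := by exact_mod_cast hBm
    have hprod1 : (A.card : ℤ) * ((n : ℤ) + 1) ≤ (n : ℤ) * ((n : ℤ) + 1) :=
      mul_le_mul_of_nonneg_right haz (by positivity)
    have hprod2 : (B.card : ℤ) * (n : ℤ) ≤ (m : ℤ) * (n : ℤ) :=
      mul_le_mul_of_nonneg_right hbz (Int.natCast_nonneg n)
    have hℓz : (ℓ : ℤ) ≤ (n : ℤ) := by exact_mod_cast hℓX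
    have hhbx : Hs.card = Fintype.card C * s - 2 * n := by
      have h1 : ((Fintype.card C * s - 2 * n : ℕ) : ℤ) ≤ (Hs.card : ℤ) := by
        by_contra hcon
        push_neg at hcon
        have h2 : (Hs.card : ℤ) ≤ ((Fintype.card C * s - 2 * n : ℕ) : ℤ) - 1 := by omega
        have h3 : (Hs.card : ℤ) * H
            ≤ (((Fintype.card C * s - 2 * n : ℕ) : ℤ) - 1) * H :=
          mul_le_mul_of_nonneg_right h2 (le_of_lt hHpos)
        have h4 : (((Fintype.card C * s - 2 * n : ℕ) : ℤ) - 1) * H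
            = ((Fintype.card C * s - 2 * n : ℕ) : ℤ) * H - H := by ring
        have hsq : (0 : ℤ) ≤ (n : ℤ) ^ 2 := sq_nonneg _
        linarith [hwt, hprod1, hprod2, h3, h4, hH, hℓz, hsq]
      have h5 : Fintype.card C * s - 2 * n ≤ Hs.card := by exact_mod_cast h1
      omega
    have habn : A.card + B.card ≤ n := by omega
    have hlight : (n : ℤ) ^ 2 + (n : ℤ) - (ℓ : ℤ)
        ≤ (A.card : ℤ) * ((n : ℤ) + 1) + (B.card : ℤ) * (n : ℤ) := by
      have h6 : ((Hs.card : ℕ) : ℤ) = ((Fintype.card C * s - 2 * n : ℕ) : ℤ) := by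
        exact_mod_cast hhbx
      have h7 : (Hs.card : ℤ) * H = ((Fintype.card C * s - 2 * n : ℕ) : ℤ) * H := by
        rw [h6]
      linarith [hwt, h7]
    have hexp : (A.card : ℤ) * ((n : ℤ) + 1) + (B.card : ℤ) * (n : ℤ)
        = (A.card : ℤ) + ((A.card : ℤ) + (B.card : ℤ)) * (n : ℤ) := by ring
    have hab : A.card + B.card = n := by
      rcases Nat.lt_or_ge (A.card + B.card) n with hlt | hge
      · exfalso
        have hz : ((A.card : ℤ) + (B.card : ℤ)) ≤ (n : ℤ) - 1 := by
          have : (A.card : ℤ) + (B.card : ℤ) + 1 ≤ (n : ℤ) := by exact_mod_cast hlt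
          omega
        have hmul2 : ((A.card : ℤ) + (B.card : ℤ)) * (n : ℤ) ≤ ((n : ℤ) - 1) * (n : ℤ) :=
          mul_le_mul_of_nonneg_right hz (Int.natCast_nonneg n)
        have he2 : ((n : ℤ) - 1) * (n : ℤ) = (n : ℤ) ^ 2 - (n : ℤ) := by ring
        have hb0 : (0 : ℤ) ≤ (B.card : ℤ) := Int.natCast_nonneg _
        linarith
      · omega
    have haℓ : n - A.card ≤ ℓ := by
      have hmul3 : ((A.card : ℤ) + (B.card : ℤ)) * (n : ℤ) = (n : ℤ) * (n : ℤ) := by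
        have : ((A.card : ℤ) + (B.card : ℤ)) = (n : ℤ) := by exact_mod_cast hab
        rw [this]
      have he3 : (n : ℤ) * (n : ℤ) = (n : ℤ) ^ 2 := by ring
      have h7 : (n : ℤ) - (ℓ : ℤ) ≤ (A.card : ℤ) := by linarith
      have h8 : (n : ℤ) ≤ (A.card : ℤ) + (ℓ : ℤ) := by linarith
      have h9 : n ≤ A.card + ℓ := by exact_mod_cast h8
      omega
    refine ⟨X - Xs, tsub_le_self, Ys, hYsle, ?_, ?_, ?_⟩
    · rw [Multiset.card_sub hXsle, hXscard, hYscard]; omega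
    · rw [Multiset.card_sub hXsle, hXscard]; exact haℓ
    · have hXX : X - (X - Xs) = Xs := tsub_tsub_cancel_of_le hXsle
      rw [hXX, ← hWdef]
      have hsum2 : ∑ c : C, apScore W c = 2 * n := by rw [hscoresum, hab]
      have hsump2 : apScore W p + ∑ c ∈ Finset.univ.erase p, apScore W c = 2 * n := by
        rw [Finset.add_sum_erase _ _ (Finset.mem_univ p)]; exact hsum2
      have hdegsum2 : hdeg p + ∑ c ∈ Finset.univ.erase p, hdeg c = Hs.card := by
        rw [Finset.add_sum_erase _ _ (Finset.mem_univ p)]; exact hdegsum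
      have hep : (Finset.univ.erase p).card + 1 = Fintype.card C := by
        rw [Finset.card_erase_of_mem (Finset.mem_univ p), Finset.card_univ]
        have : 0 < Fintype.card C := Fintype.card_pos_iff.mpr ⟨p⟩
        omega
      have hmul : Fintype.card C * s = (Finset.univ.erase p).card * s + s := by
        rw [← hep]; ring
      have hsum3 : ∑ c ∈ Finset.univ.erase p, (apScore W c + hdeg c)
          = ∑ c ∈ Finset.univ.erase p, apScore W c
            + ∑ c ∈ Finset.univ.erase p, hdeg c := Finset.sum_add_distrib
      have hsum4 : ∑ c ∈ Finset.univ.erase p, (apScore W c + hdeg c)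
          ≤ (Finset.univ.erase p).card * s := by
        calc ∑ c ∈ Finset.univ.erase p, (apScore W c + hdeg c)
            ≤ ∑ _c ∈ Finset.univ.erase p, s := Finset.sum_le_sum (fun c _ => hcapc c)
          _ = (Finset.univ.erase p).card * s := by rw [Finset.sum_const, smul_eq_mul]
      have hps : s ≤ apScore W p := by omega
      intro d
      by_cases hdp : d = p
      · rw [hdp]
      · have h10 := hcapc d
        omega
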